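/- Let G be a finite group, H and K subgroups, and π an irreducible complex representation of G with dim π^H = dim π^K = 1. Let v_H ∈ π^H and v_K ∈ π^K be unit vectors with respect to a G-invariant inner product on π. Then |⟨v_H, v_K⟩|² = (1/(|H||K|)) · Σ_{h∈H} Σ_{k∈K} χ_π(hk), where χ_π is the character of π. -/

import Mathlib

/-!
Averaging `ρ` over a subgroup `J` gives `|J|` times the orthogonal projection onto the
`J`-invariants; when these form the line through the unit vector `v_J`, that projection is the
rank-one operator `x ↦ ⟪v_J, x⟫ v_J`. Hence `∑_{h,k} ρ(hk) = |H||K| ⟪v_H, v_K⟫ (x ↦ ⟪v_K, x⟫ v_H)`,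
whose trace is `|H||K| ⟪v_H, v_K⟫ ⟪v_K, v_H⟫ = |H||K| |⟪v_H, v_K⟫|²`.
-/

open scoped InnerProductSpace

def fixedSpace {k G V : Type*} [CommSemiring k] [Group G] [AddCommMonoid V] [Module k V]
    (ρ : Representation k G V) (H : Subgroup G) : Submodule k V where
  carrier := {v | ∀ h ∈ H, ρ h v = v}
  add_mem' := by
    intro a b ha hb h hh
    simp [map_add, ha h hh, hb h hh]
  zero_mem' := by
    intro h hh
    simp
  smul_mem' := by
    intro c a ha h hh
    simp [map_smul, ha h hh]

open InnerProductSpace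

lemma sum_apply_mem_fixedSpace {k G V : Type*} [CommSemiring k] [Group G] [AddCommMonoid V]
    [Module k V] (ρ : Representation k G V) (J : Subgroup G) [Fintype J] (x : V) :
    ∑ j : J, ρ j x ∈ fixedSpace ρ J := by
  intro g hg
  simp_rw [map_sum, ← Module.End.mul_apply, ← map_mul]
  exact Fintype.sum_equiv (Equiv.mulLeft (⟨g, hg⟩ : J)) _ _ fun _ => rfl

lemma eq_inner_smul_of_mem_span_singleton {𝕜 V : Type*} [RCLike 𝕜] [NormedAddCommGroup V]
    [InnerProductSpace 𝕜 V] {v y : V} (hv : ‖v‖ = 1) (hy : y ∈ 𝕜 ∙ v) : y = ⟪v, y⟫_𝕜 • v := by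
  obtain ⟨c, rfl⟩ := Submodule.mem_span_singleton.mp hy
  simp [inner_smul_right, inner_self_eq_norm_sq_to_K, hv]

section Unitary

variable {𝕜 G V : Type*} [RCLike 𝕜] [Group G] [NormedAddCommGroup V] [InnerProductSpace 𝕜 V]
  {ρ : Representation 𝕜 G V} (hρ : ∀ g v w, ⟪ρ g v, ρ g w⟫_𝕜 = ⟪v, w⟫_𝕜)
  {J : Subgroup G} [Fintype J]
include hρ

lemma inner_sum_apply_of_mem_fixedSpace {v : V} (hv : v ∈ fixedSpace ρ J) (x : V) :
    ⟪v, ∑ j : J, ρ j x⟫_𝕜 = Fintype.card J * ⟪v, x⟫_𝕜 := by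
  have hterm (j : J) : ⟪v, ρ j x⟫_𝕜 = ⟪v, x⟫_𝕜 := by rw [← hρ j v x, hv j j.2]
  simp [inner_sum, hterm]

lemma sum_eq_card_smul_rankOne [FiniteDimensional 𝕜 V]
    (hJ : Module.finrank 𝕜 (fixedSpace ρ J) = 1) {v : V} (hv : v ∈ fixedSpace ρ J)
    (hv1 : ‖v‖ = 1) :
    ∑ j : J, ρ j = (Fintype.card J : 𝕜) • (rankOne 𝕜 v v : V →ₗ[𝕜] V) := by
  have hv0 : v ≠ 0 := by rintro rfl; simp at hv1
  have hspan : fixedSpace ρ J = 𝕜 ∙ v :=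
    (Submodule.eq_of_le_of_finrank_le ((Submodule.span_singleton_le_iff_mem v _).mpr hv)
      (by rw [hJ, finrank_span_singleton hv0])).symm
  ext x
  have hx := sum_apply_mem_fixedSpace ρ J x
  rw [hspan] at hx
  rw [LinearMap.sum_apply, eq_inner_smul_of_mem_span_singleton hv1 hx,
    inner_sum_apply_of_mem_fixedSpace hρ hv]
  simp [smul_smul]

end Unitary

theorem stmt_0 {G : Type} [Group G] (H K : Subgroup G)
    [Fintype H] [Fintype K]
    {V : Type} [NormedAddCommGroup V] [InnerProductSpace ℂ V] [FiniteDimensional ℂ V]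
    (ρ : Representation ℂ G V)
    (hinv : ∀ (g : G) (v w : V), ⟪ρ g v, ρ g w⟫_ℂ = ⟪v, w⟫_ℂ)
    (hH : Module.finrank ℂ (fixedSpace ρ H) = 1)
    (hK : Module.finrank ℂ (fixedSpace ρ K) = 1)
    (vH vK : V) (hvH : vH ∈ fixedSpace ρ H) (hvK : vK ∈ fixedSpace ρ K)
    (hvH1 : ‖vH‖ = 1) (hvK1 : ‖vK‖ = 1) :
    (‖⟪vH, vK⟫_ℂ‖ ^ 2 : ℂ) =
      ((Fintype.card H : ℂ) * (Fintype.card K : ℂ))⁻¹ *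
        ∑ h : H, ∑ k : K, LinearMap.trace ℂ V (ρ ((h : G) * (k : G))) := by
  have hcard : (Fintype.card H : ℂ) * Fintype.card K ≠ 0 := by simp
  have hsum : ∑ h : H, ∑ k : K, ρ ((h : G) * (k : G)) = (∑ h : H, ρ h) * ∑ k : K, ρ k := by
    simp [Finset.sum_mul_sum, map_mul]
  have hproj : (rankOne ℂ vH vH : V →ₗ[ℂ] V) * rankOne ℂ vK vK =
      ⟪vH, vK⟫_ℂ • (rankOne ℂ vH vK : V →ₗ[ℂ] V) := by
    rw [Module.End.mul_eq_comp, ← ContinuousLinearMap.toLinearMap_comp, rankOne_comp_rankOne]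
    rfl
  have htrace : ∑ h : H, ∑ k : K, LinearMap.trace ℂ V (ρ ((h : G) * (k : G))) =
      LinearMap.trace ℂ V (∑ h : H, ∑ k : K, ρ ((h : G) * (k : G))) := by
    simp only [map_sum]
  rw [htrace, hsum, sum_eq_card_smul_rankOne hinv hH hvH hvH1,
    sum_eq_card_smul_rankOne hinv hK hvK hvK1, smul_mul_smul, hproj, map_smul, map_smul,
    trace_rankOne, ← inner_conj_symm vK vH, smul_eq_mul, smul_eq_mul,
    inv_mul_cancel_left₀ hcard, Complex.mul_conj']
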